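/- arXiv:2312.12698 — 2 statements merged into one kernel-verified Lean document; each statement's English description precedes it below -/
import Mathlib

section
/- Let a configuration on Z have occupied nodes exactly an interval-spanning set with leftmost occupied node a and rightmost occupied node b, with M = b - a + 1 nodes between the borders inclusive. Under the FSYNC dynamics where at each round every robot on the leftmost occupied node moves one step right and every robot on the rightmost occupied node moves one step left (and no other robot moves), if M is odd then after exactly (M-1)/2 rounds all robots occupy the single node (a+b)/2. -/
/-!
Each round moves the leftmost occupied node one step right and the rightmost one step left,
as long as they are at least two apart: the robots at the borders land on `a + 1` and `b - 1`,
and every other robot already lies in between. Starting from `b - a = 2k`, after `k` rounds both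
borders sit at `a + k`, so the whole configuration is concentrated there.
-/

noncomputable def borderStep (f : ℤ →₀ ℕ) : ℤ →₀ ℕ :=
  if h : f.support.Nonempty then
    let a := f.support.min' h
    let b := f.support.max' h
    if a = b then f
    else ((f.erase a).erase b) + Finsupp.single (a+1) (f a) + Finsupp.single (b-1) (f b)
  else f

theorem Finset.eq_singleton_of_min'_eq_max' {α : Type*} [LinearOrder α] {s : Finset α}
    (hs : s.Nonempty) {c : α} (hmin : s.min' hs = c) (hmax : s.max' hs = c) : s = {c} :=
  Finset.eq_singleton_iff_unique_mem.mpr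
    ⟨hmin ▸ s.min'_mem hs, fun x hx =>
      le_antisymm (hmax ▸ s.le_max' x hx) (hmin ▸ s.min'_le x hx)⟩

section borderStep

variable {f : ℤ →₀ ℕ} {h : f.support.Nonempty} {a b : ℤ}

theorem borderStep_apply (ha : f.support.min' h = a) (hb : f.support.max' h = b) (hab : a ≠ b)
    (x : ℤ) :
    borderStep f x = (if x = b then 0 else if x = a then 0 else f x)
      + (if a + 1 = x then f a else 0) + (if b - 1 = x then f b else 0) := by
  rw [borderStep, dif_pos h]
  simp only [ha, hb, if_neg hab, Finsupp.coe_add, Pi.add_apply, Finsupp.single_apply,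
    Finsupp.erase_apply]

theorem exists_borderStep_min'_max' (ha : f.support.min' h = a) (hb : f.support.max' h = b)
    (hab : a + 1 < b) :
    ∃ h' : (borderStep f).support.Nonempty,
      (borderStep f).support.min' h' = a + 1 ∧ (borderStep f).support.max' h' = b - 1 := by
  obtain ⟨haf, ha_le⟩ := (Finset.min'_eq_iff _ _ a).mp ha
  obtain ⟨hbf, hb_ge⟩ := (Finset.max'_eq_iff _ _ b).mp hb
  rw [Finsupp.mem_support_iff] at haf hbf
  have step := borderStep_apply ha hb (by omega)
  have hleft : a + 1 ∈ (borderStep f).support := by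
    rw [Finsupp.mem_support_iff, step]
    simp only [if_neg (show a + 1 ≠ b by omega), if_neg (show a + 1 ≠ a by omega), if_true]
    omega
  have hright : b - 1 ∈ (borderStep f).support := by
    rw [Finsupp.mem_support_iff, step]
    simp only [if_neg (show b - 1 ≠ b by omega), if_neg (show b - 1 ≠ a by omega), if_true]
    omega
  have hbetween : ∀ x ∈ (borderStep f).support, a + 1 ≤ x ∧ x ≤ b - 1 := by
    intro x hx
    by_cases hxa : a + 1 = x
    · omega
    by_cases hxb : b - 1 = x
    · omega
    rw [Finsupp.mem_support_iff, step] at hx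
    simp only [if_neg hxa, if_neg hxb, add_zero] at hx
    split_ifs at hx
    · exact absurd rfl hx
    · exact absurd rfl hx
    · have := ha_le x (Finsupp.mem_support_iff.mpr hx)
      have := hb_ge x (Finsupp.mem_support_iff.mpr hx)
      omega
  exact ⟨⟨a + 1, hleft⟩,
    (Finset.min'_eq_iff _ _ _).mpr ⟨hleft, fun x hx => (hbetween x hx).1⟩,
    (Finset.max'_eq_iff _ _ _).mpr ⟨hright, fun x hx => (hbetween x hx).2⟩⟩

theorem exists_iterate_borderStep_min'_max' (ha : f.support.min' h = a)
    (hb : f.support.max' h = b) {j : ℕ} (hj : 2 * (j : ℤ) ≤ b - a) :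
    ∃ h' : (borderStep^[j] f).support.Nonempty,
      (borderStep^[j] f).support.min' h' = a + j ∧ (borderStep^[j] f).support.max' h' = b - j := by
  induction j with
  | zero => exact ⟨h, by simpa using ha, by simpa using hb⟩
  | succ j ih =>
    obtain ⟨h', hmin, hmax⟩ := ih (by omega)
    obtain ⟨h'', hmin', hmax'⟩ := exists_borderStep_min'_max' hmin hmax (by omega)
    rw [Function.iterate_succ_apply']
    exact ⟨h'', by rw [hmin']; push_cast; ring, by rw [hmax']; push_cast; ring⟩

end borderStep

/-- `M = b - a + 1 = 2k + 1`, so `(M-1)/2 = k` and `(a+b)/2 = a + k`. -/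
theorem stmt2 (f : ℤ →₀ ℕ) (h : f.support.Nonempty) (a b : ℤ)
    (ha : f.support.min' h = a) (hb : f.support.max' h = b)
    (k : ℕ) (hM : b - a = 2 * (k : ℤ)) :
    (borderStep^[k] f).support = {a + (k : ℤ)} := by
  obtain ⟨h', hmin, hmax⟩ := exists_iterate_borderStep_min'_max' ha hb hM.ge
  exact Finset.eq_singleton_of_min'_eq_max' h' hmin (by rw [hmax]; omega)
end

section
/- For any configuration on Z with support of size exactly 2 at adjacent nodes {u, u+1}, and any deterministic per-node move assignment in which at least one robot at each node is commanded to move, there is a choice of which robots move (an adversarial subset, modeling crashes or SSYNC activation) such that the resulting configuration still has at least 2 occupied nodes. -/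
def activatedPos {R : Type*} [DecidableEq R] (pos move : R → ℤ) (S : Finset R) (r : R) : ℤ :=
  if r ∈ S then pos r + move r else pos r

lemma two_le_card_image_of_ne {α β : Type*} [Fintype α] [DecidableEq β] (f : α → β) {a b : α}
    (hab : f a ≠ f b) : 2 ≤ (Finset.univ.image f).card :=
  Finset.one_lt_card.mpr
    ⟨f a, Finset.mem_image_of_mem f (Finset.mem_univ a),
      f b, Finset.mem_image_of_mem f (Finset.mem_univ b), hab⟩

/-- Activating only `r₁` fails just when it lands on `r₂`, activating only `r₂` just when it
lands on `r₁`, and when both do so, activating both swaps them. -/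
lemma exists_activation_separating {R : Type*} [DecidableEq R] (pos move : R → ℤ) {r₁ r₂ : R}
    (hadj : pos r₂ = pos r₁ + 1) :
    ∃ S : Finset R, S.Nonempty ∧
      activatedPos pos move S r₁ ≠ activatedPos pos move S r₂ := by
  have hne : r₁ ≠ r₂ := fun h => by rw [h] at hadj; omega
  by_cases hr₁ : move r₁ = 1
  · by_cases hr₂ : move r₂ = -1
    · refine ⟨{r₁, r₂}, Finset.insert_nonempty _ _, ?_⟩
      simp only [activatedPos, Finset.mem_insert, Finset.mem_singleton, true_or, or_true,
        if_true]
      omega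
    · refine ⟨{r₂}, Finset.singleton_nonempty _, ?_⟩
      simp only [activatedPos, Finset.mem_singleton, hne, if_true, if_false]
      omega
  · refine ⟨{r₁}, Finset.singleton_nonempty _, ?_⟩
    simp only [activatedPos, Finset.mem_singleton, hne.symm, if_true, if_false]
    omega

theorem stmt6_general {R : Type*} [Fintype R] [DecidableEq R] (u : ℤ)
    (pos : R → ℤ)
    (move : R → ℤ)
    (hm1 : ∃ r, pos r = u ∧ move r ≠ 0)
    (hm2 : ∃ r, pos r = u + 1 ∧ move r ≠ 0) :
    ∃ S : Finset R, S.Nonempty ∧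
      2 ≤ (Finset.univ.image
        (fun r => if r ∈ S then pos r + move r else pos r)).card := by
  obtain ⟨r₁, hr₁, -⟩ := hm1
  obtain ⟨r₂, hr₂, -⟩ := hm2
  obtain ⟨S, hS, hsep⟩ :=
    exists_activation_separating pos move (r₁ := r₁) (r₂ := r₂) (by rw [hr₁, hr₂])
  exact ⟨S, hS, two_le_card_image_of_ne (activatedPos pos move S) hsep⟩

/-- From a configuration supported on two adjacent nodes `{u, u+1}`, for any
move assignment (moves in `{-1,0,1}`) in which at least one robot at each node
is commanded to move, the adversary can select a nonempty subset of robots to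
execute their moves so that at least `2` nodes remain occupied. -/
theorem stmt6 {R : Type*} [Fintype R] [DecidableEq R] (u : ℤ)
    (pos : R → ℤ) (hpos : ∀ r, pos r = u ∨ pos r = u + 1)
    (h1 : ∃ r, pos r = u) (h2 : ∃ r, pos r = u + 1)
    (move : R → ℤ) (hmove : ∀ r, move r = -1 ∨ move r = 0 ∨ move r = 1)
    (hm1 : ∃ r, pos r = u ∧ move r ≠ 0)
    (hm2 : ∃ r, pos r = u + 1 ∧ move r ≠ 0) :
    ∃ S : Finset R, S.Nonempty ∧
      2 ≤ (Finset.univ.image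
        (fun r => if r ∈ S then pos r + move r else pos r)).card :=
  stmt6_general u pos move hm1 hm2
end
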